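/- arXiv:2605.27876 — 2 statements merged into one kernel-verified Lean document; each statement's English description precedes it below -/
import Mathlib

section
/- Let q ∈ ℂ \ {0} with |q| ≠ 1, and let a, b, c be relatively q-prime polynomials over ℂ, not all constants, satisfying a + b = c. Then max{deg(a), deg(b), deg(c)} ≤ deg(rad_q(abc)) - 1. -/
open Polynomial

noncomputable section

/-- q-number [n]_q = 1 + q + ... + q^{n-1}. -/
def qNum (q : ℂ) (n : ℕ) : ℂ := ∑ i ∈ Finset.range n, q ^ i

/-- q-factorial. -/
def qFact (q : ℂ) (n : ℕ) : ℂ := ∏ i ∈ Finset.range n, qNum q (i + 1)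

/-- q-binomial coefficient. -/
def qBinom (q : ℂ) (k j : ℕ) : ℂ := qFact q k / (qFact q j * qFact q (k - j))

/-- q-derivative of a function. -/
def Dqf (q : ℂ) (f : ℂ → ℂ) : ℂ → ℂ := fun z => (f (q * z) - f z) / (q * z - z)

/-- q-analogue of the power (z-w)^n : [z-w]_q^n = (z-w)(z-qw)...(z-q^{n-1}w). -/
def qPow (q w : ℂ) (n : ℕ) : Polynomial ℂ := ∏ i ∈ Finset.range n, (X - C (q ^ i * w))

/-- q-derivative as a polynomial operation. -/
def qDeriv (q : ℂ) (f : Polynomial ℂ) : Polynomial ℂ :=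
  C (q - 1)⁻¹ * ((f.comp (C q * X) - f) /ₘ X)

/-- `w` is a zero of `f` with q-weight `n`. -/
def IsZeroQWeight (q : ℂ) (f : Polynomial ℂ) (w : ℂ) (n : ℕ) : Prop :=
  (w = 0 ∧ f ≠ 0 ∧ Polynomial.rootMultiplicity 0 f = n) ∨
  (w ≠ 0 ∧ (∀ k < n, f.eval (q ^ k * w) = 0) ∧ f.eval (q ^ n * w) ≠ 0)

/-- Canonical q-chain factorization of a polynomial. -/
structure QFactorization (q : ℂ) (P : Polynomial ℂ) where
  N : ℕ
  z : Fin N → ℂ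
  n : Fin N → ℕ
  A : ℂ
  A_ne : A ≠ 0
  n_pos : ∀ j, 1 ≤ n j
  eq : P = Polynomial.C A * ∏ j, qPow q (z j) (n j)
  deg_sum : ∑ j, n j = P.natDegree
  chain : ∀ j : Fin N,
    IsZeroQWeight q (∏ k ∈ Finset.univ.filter (fun k => j ≤ k), qPow q (z k) (n k)) (z j) (n j)
  maximal : ∀ j : Fin N, z j ≠ 0 →
    (∏ k ∈ Finset.univ.filter (fun k => j ≤ k), qPow q (z k) (n k)).eval (q⁻¹ * z j) ≠ 0

/-- q-difference radical associated to a canonical factorization. -/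
def radQ {q : ℂ} {P : Polynomial ℂ} (F : QFactorization q P) : Polynomial ℂ :=
  ∏ j, (X - C (F.z j))

local instance : DecidableEq (Polynomial ℂ) := Classical.decEq _

/-- Truncated q-radical of level μ. -/
def radTruncQ {q : ℂ} {P : Polynomial ℂ} (F : QFactorization q P) (μ : ℕ) : Polynomial ℂ :=
  EuclideanDomain.gcd (∏ j, qPow q (F.z j) (F.n j)) (∏ j, qPow q (F.z j) μ)

/-- f and g have a nonconstant common q-divisor. -/
def HasCommonQDivisor (q : ℂ) (f g : Polynomial ℂ) : Prop :=
  ∃ (z₀ z₁ z₂ : ℂ) (m n : ℕ) (F G : Polynomial ℂ), 1 ≤ m ∧ 1 ≤ n ∧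
    f = qPow q z₁ m * F ∧ g = qPow q z₂ n * G ∧ (z₀ = z₁ ∨ z₀ = z₂) ∧
    f * g = qPow q z₀ (m + n) * (F * G)

/-- q-shifted power [P]_q^n(z) = P(z)P(qz)...(P(q^{n-1}z)). -/
def qShiftPow (q : ℂ) (P : Polynomial ℂ) (n : ℕ) : Polynomial ℂ :=
  ∏ i ∈ Finset.range n, P.comp (C (q ^ i) * X)

/-- gcd of a list of polynomials. -/
def gcdList (l : List (Polynomial ℂ)) : Polynomial ℂ := l.foldr EuclideanDomain.gcd 0

/-
As in Mason's proof, the role of the Wronskian is played by the q-Wronskian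
`W = a(z) b(qz) - a(qz) b(z)`. Because `a + b = c`, `W` is also `a(z) c(qz) - a(qz) c(z)` and
`c(z) b(qz) - c(qz) b(z)`, so `deg W ≤ deg abc - max(deg a, deg b, deg c)`.

If `W ≠ 0`, count its zeros. Relative q-primality means that when `u` and `qu` are both roots of
`abc`, they are roots of the same factor, and then `W` vanishes at `u` to order at least
`min(ord_u abc, ord_{qu} abc)`. Every chain `z, qz, …, q^(n-1) z` of the q-factorization therefore
contributes `n - 1` zeros of `W`, and `W(0) = 0` contributes one more, so
`deg W ≥ deg abc - N + 1`, where `N = deg rad_q(abc)` is the number of chains.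

If `W = 0`, then `a / b` is invariant under `z ↦ qz`, so it is constant because `|q| ≠ 1`. Then
`a`, `b`, `c` have the same roots, so `abc` has no two roots `u`, `qu`; every chain has length
one and `N = deg abc = 3 deg a`.
-/

section qChain

variable {M : Type*} [Monoid M]

def qChain (q w : M) (n : ℕ) : Multiset M := (Multiset.range n).map fun i => q ^ i * w

lemma qChain_succ (q w : M) (n : ℕ) : qChain q w (n + 1) = w ::ₘ qChain q (q * w) n := by
  have : Multiset.range (n + 1) = 0 ::ₘ (Multiset.range n).map Nat.succ :=
    congrArg ((↑) : List ℕ → Multiset ℕ) List.range_succ_eq_map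
  simp only [qChain, this, Multiset.map_cons, Multiset.map_map, pow_zero, one_mul]
  exact congrArg _ (Multiset.map_congr rfl fun i _ => by simp [pow_succ, mul_assoc])

lemma map_mul_qChain (q w : M) (n : ℕ) : (qChain q w n).map (q * ·) = qChain q (q * w) n := by
  simp only [qChain, Multiset.map_map]
  exact Multiset.map_congr rfl fun i _ => by simp [← mul_assoc, ← pow_succ, ← pow_succ']

lemma qChain_pred_le (q w : M) (n : ℕ) : qChain q w (n - 1) ≤ qChain q w n :=
  Multiset.map_le_map (Multiset.range_le.2 (Nat.sub_le n 1))

lemma map_mul_qChain_pred_le (q w : M) (n : ℕ) :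
    (qChain q w (n - 1)).map (q * ·) ≤ qChain q w n := by
  cases n with
  | zero => simp [qChain]
  | succ n =>
    rw [Nat.add_sub_cancel, map_mul_qChain, qChain_succ]
    exact Multiset.le_cons_self _ _

lemma count_zero_qChain {M₀ : Type*} [MonoidWithZero M₀] [NoZeroDivisors M₀]
    [DecidableEq M₀] {q : M₀} (hq : q ≠ 0) (w : M₀) (n : ℕ) :
    (qChain q w n).count 0 = if w = 0 then n else 0 := by
  split_ifs with hw
  · simp [qChain, hw, Multiset.map_const']
  · refine Multiset.count_eq_zero.2 fun h => ?_
    obtain ⟨i, -, hi⟩ := Multiset.mem_map.1 h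
    exact mul_ne_zero (pow_ne_zero i hq) hw hi

end qChain

lemma qPow_monic (q w : ℂ) (n : ℕ) : (qPow q w n).Monic :=
  monic_prod_of_monic _ _ fun _ _ => monic_X_sub_C _

lemma roots_qPow (q w : ℂ) (n : ℕ) : (qPow q w n).roots = qChain q w n := by
  rw [qPow, roots_prod _ _ (qPow_monic q w n).ne_zero]
  simp only [roots_X_sub_C, Finset.range_val, qChain]
  exact Multiset.bind_singleton _ _

namespace QFactorization

variable {q : ℂ} {P : ℂ[X]} (F : QFactorization q P)

lemma ne_zero (F : QFactorization q P) : P ≠ 0 := by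
  rw [F.eq]
  exact mul_ne_zero (C_ne_zero.2 F.A_ne)
    (monic_prod_of_monic _ _ fun j _ => qPow_monic q (F.z j) (F.n j)).ne_zero

lemma natDegree_radQ : (radQ F).natDegree = F.N := by
  rw [radQ, natDegree_prod_of_monic _ _ fun j _ => monic_X_sub_C _]
  simp

lemma roots_eq : P.roots = ∑ j, qChain q (F.z j) (F.n j) := by
  conv_lhs => rw [F.eq]
  rw [roots_C_mul _ F.A_ne, roots_prod _ _ (monic_prod_of_monic _ _ fun j _ =>
    qPow_monic q (F.z j) (F.n j)).ne_zero]
  simp only [roots_qPow, Multiset.bind, Multiset.join, Finset.sum_eq_multiset_sum]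

/-- The roots `u` of `P`, counted with multiplicity, for which `q * u` is the next root in the
same chain. -/
def nonTerminalRoots : Multiset ℂ := ∑ j, qChain q (F.z j) (F.n j - 1)

lemma card_nonTerminalRoots_add : Multiset.card F.nonTerminalRoots + F.N = P.natDegree := by
  rw [← F.deg_sum, nonTerminalRoots, Multiset.card_sum]
  simp only [qChain, Multiset.card_map, Multiset.card_range]
  calc ∑ j, (F.n j - 1) + F.N = ∑ j, (F.n j - 1 + 1) := by simp [Finset.sum_add_distrib]
    _ = ∑ j, F.n j := Finset.sum_congr rfl fun j _ => Nat.sub_add_cancel (F.n_pos j)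

lemma count_nonTerminalRoots_le (hq : q ≠ 0) (u : ℂ) :
    F.nonTerminalRoots.count u ≤ min (P.rootMultiplicity u) (P.rootMultiplicity (q * u)) := by
  simp only [← count_roots, F.roots_eq, nonTerminalRoots, Multiset.count_sum']
  refine le_min (Finset.sum_le_sum fun j _ => Multiset.count_le_of_le _ (qChain_pred_le ..))
    (Finset.sum_le_sum fun j _ => ?_)
  rw [← Multiset.count_map_eq_count' _ _ (mul_right_injective₀ hq)]
  exact Multiset.count_le_of_le _ (map_mul_qChain_pred_le ..)

lemma count_zero_nonTerminalRoots_lt (hq : q ≠ 0) (h : 0 < P.rootMultiplicity 0) :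
    F.nonTerminalRoots.count 0 < P.rootMultiplicity 0 := by
  simp only [← count_roots, F.roots_eq, nonTerminalRoots, Multiset.count_sum',
    count_zero_qChain hq] at h ⊢
  obtain ⟨j, -, hj⟩ := Finset.exists_ne_zero_of_sum_ne_zero h.ne'
  refine Finset.sum_lt_sum (fun i _ => by split_ifs <;> omega) ⟨j, Finset.mem_univ _, ?_⟩
  split_ifs at hj ⊢ <;> omega

lemma natDegree_add_one_le_natDegree_add_N (hq : q ≠ 0) {W : ℂ[X]} (hW : W ≠ 0)
    (hW0 : W.IsRoot 0)
    (hmult : ∀ u, min (P.rootMultiplicity u) (P.rootMultiplicity (q * u)) ≤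
      W.rootMultiplicity u) :
    P.natDegree + 1 ≤ W.natDegree + F.N := by
  have hle : 0 ::ₘ F.nonTerminalRoots ≤ W.roots := by
    refine Multiset.le_iff_count.2 fun u => ?_
    rw [count_roots]
    by_cases hu : u = 0
    · subst hu
      have hP0 := hmult 0
      have hL0 := F.count_nonTerminalRoots_le hq 0
      rw [mul_zero, min_self] at hP0 hL0
      rw [Multiset.count_cons_self]
      rcases (P.rootMultiplicity 0).eq_zero_or_pos with h | h
      · have := (rootMultiplicity_pos hW).2 hW0
        omega
      · have := F.count_zero_nonTerminalRoots_lt hq h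
        omega
    · rw [Multiset.count_cons_of_ne hu]
      exact (F.count_nonTerminalRoots_le hq u).trans (hmult u)
  have := Multiset.card_le_card hle
  have := F.card_nonTerminalRoots_add
  have := W.card_roots'
  rw [Multiset.card_cons] at *
  omega

lemma natDegree_le_N (hq : q ≠ 0)
    (h : ∀ u, min (P.rootMultiplicity u) (P.rootMultiplicity (q * u)) = 0) :
    P.natDegree ≤ F.N := by
  have hL : F.nonTerminalRoots = 0 :=
    Multiset.ext.2 fun u => by simpa [h u] using F.count_nonTerminalRoots_le hq u
  have := F.card_nonTerminalRoots_add
  rw [hL, Multiset.card_zero] at this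
  omega

end QFactorization

lemma pow_injective_of_norm_ne_one {𝕜 : Type*} [NormedDivisionRing 𝕜] {q : 𝕜}
    (hq : q ≠ 0) (habs : ‖q‖ ≠ 1) : Function.Injective (q ^ · : ℕ → 𝕜) := fun m n h =>
  pow_right_injective₀ (norm_pos_iff.2 hq) habs <| by
    simpa only [norm_pow] using congrArg norm h

lemma rootMultiplicity_C_mul {R : Type*} [CommRing R] [IsDomain R] {l : R} (hl : l ≠ 0)
    (p : R[X]) (x : R) : (C l * p).rootMultiplicity x = p.rootMultiplicity x := by
  classical
  rw [← count_roots, ← count_roots, roots_C_mul _ hl]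

def qWronskian {R : Type*} [CommRing R] (q : R) (f g : R[X]) : R[X] :=
  f * g.comp (C q * X) - f.comp (C q * X) * g

section qWronskian

variable {R : Type*} [CommRing R] {q : R} {f g : R[X]}

lemma qWronskian_eq_of_add_eq {h : R[X]} (hsum : f + g = h) :
    qWronskian q f h = qWronskian q f g ∧ qWronskian q h g = qWronskian q f g := by
  subst hsum
  constructor <;> simp only [qWronskian, add_comp] <;> ring

lemma qWronskian_isRoot_zero (q : R) (f g : R[X]) : (qWronskian q f g).IsRoot 0 := by
  simp [qWronskian, IsRoot, eval_comp]

lemma natDegree_comp_C_mul_X_le (q : R) (f : R[X]) :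
    (f.comp (C q * X)).natDegree ≤ f.natDegree :=
  natDegree_comp_le.trans <| by
    simpa using Nat.mul_le_mul_left f.natDegree ((natDegree_C_mul_le q X).trans natDegree_X_le)

lemma natDegree_qWronskian_le (q : R) (f g : R[X]) :
    (qWronskian q f g).natDegree ≤ f.natDegree + g.natDegree := by
  refine (natDegree_sub_le _ _).trans (max_le ?_ ?_) <;> refine natDegree_mul_le.trans ?_
  · have := natDegree_comp_C_mul_X_le q g; omega
  · have := natDegree_comp_C_mul_X_le q f; omega

lemma pow_dvd_comp_C_mul_X {u : R} {d : ℕ} (h : (X - C (q * u)) ^ d ∣ f) :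
    (X - C u) ^ d ∣ f.comp (C q * X) := by
  obtain ⟨g, rfl⟩ := h
  refine ⟨C q ^ d * g.comp (C q * X), ?_⟩
  rw [mul_comp, pow_comp, sub_comp, X_comp, C_comp, C_mul, ← mul_sub, mul_pow]
  ring

lemma pow_dvd_qWronskian (q u : R) (f g : R[X]) :
    (X - C u) ^ (min (f.rootMultiplicity u) (f.rootMultiplicity (q * u)) +
      min (g.rootMultiplicity u) (g.rootMultiplicity (q * u))) ∣ qWronskian q f g := by
  have key (p : R[X]) :
      (X - C u) ^ min (p.rootMultiplicity u) (p.rootMultiplicity (q * u)) ∣ p ∧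
      (X - C u) ^ min (p.rootMultiplicity u) (p.rootMultiplicity (q * u)) ∣ p.comp (C q * X) :=
    ⟨(pow_dvd_pow _ (min_le_left _ _)).trans (pow_rootMultiplicity_dvd p u),
      pow_dvd_comp_C_mul_X ((pow_dvd_pow _ (min_le_right _ _)).trans
        (pow_rootMultiplicity_dvd p (q * u)))⟩
  rw [pow_add]
  exact dvd_sub (mul_dvd_mul (key f).1 (key g).2) (mul_dvd_mul (key f).2 (key g).1)

lemma add_min_rootMultiplicity_le_qWronskian (hW : qWronskian q f g ≠ 0) (u : R) :
    min (f.rootMultiplicity u) (f.rootMultiplicity (q * u)) +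
      min (g.rootMultiplicity u) (g.rootMultiplicity (q * u)) ≤
      (qWronskian q f g).rootMultiplicity u :=
  (le_rootMultiplicity_iff hW).2 (pow_dvd_qWronskian q u f g)

end qWronskian

section qWronskianField

variable {K : Type*} [Field K] {q : K} {f g : K[X]}

lemma leadingCoeff_comp_C_mul_X (hq : q ≠ 0) (f : K[X]) :
    (f.comp (C q * X)).leadingCoeff = f.leadingCoeff * q ^ f.natDegree := by
  rw [leadingCoeff_comp (by rw [natDegree_C_mul_X q hq]; exact one_ne_zero), leadingCoeff_C_mul_X]

lemma natDegree_eq_of_qWronskian_eq_zero (hq : Function.Injective (q ^ · : ℕ → K))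
    (hf : f ≠ 0) (hg : g ≠ 0) (h : qWronskian q f g = 0) : f.natDegree = g.natDegree := by
  have hq0 : q ≠ 0 := by
    rintro rfl
    exact absurd (hq (a₁ := 1) (a₂ := 2) (by simp)) (by decide)
  have hlc := congrArg leadingCoeff (sub_eq_zero.1 h)
  rw [leadingCoeff_mul, leadingCoeff_mul, leadingCoeff_comp_C_mul_X hq0,
    leadingCoeff_comp_C_mul_X hq0] at hlc
  have hfg : f.leadingCoeff * g.leadingCoeff ≠ 0 :=
    mul_ne_zero (leadingCoeff_ne_zero.2 hf) (leadingCoeff_ne_zero.2 hg)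
  exact (hq (mul_left_cancel₀ hfg (by linear_combination hlc))).symm

/-- `qWronskian q f g = 0` says that `f / g` is invariant under `z ↦ q z`; as `q` has infinite
order, it is then constant. -/
lemma exists_eq_C_mul_of_qWronskian_eq_zero (hq : Function.Injective (q ^ · : ℕ → K))
    (hg : g ≠ 0) (h : qWronskian q f g = 0) : ∃ l, f = C l * g := by
  set l := f.leadingCoeff / g.leadingCoeff
  refine ⟨l, by_contra fun hne => ?_⟩
  have hr : qWronskian q (f - C l * g) g = 0 := by
    rw [← h]; simp only [qWronskian, sub_comp, mul_comp, C_comp]; ring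
  have hf : f ≠ 0 := by rintro rfl; simp [l] at hne
  have hlg : g.leadingCoeff ≠ 0 := leadingCoeff_ne_zero.2 hg
  have hdeg := natDegree_eq_of_qWronskian_eq_zero hq hf hg h
  have hlt : (f - C l * g).degree < f.degree := by
    refine degree_sub_lt_left ?_ hf ?_
    · rw [degree_C_mul (div_ne_zero (leadingCoeff_ne_zero.2 hf) hlg), degree_eq_natDegree hf,
        degree_eq_natDegree hg, hdeg]
    · rw [leadingCoeff_mul, leadingCoeff_C, div_mul_cancel₀ _ hlg]
  have := natDegree_eq_of_qWronskian_eq_zero hq (sub_ne_zero.2 hne) hg hr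
  have := natDegree_lt_natDegree (sub_ne_zero.2 hne) hlt
  omega

end qWronskianField

lemma HasCommonQDivisor.symm {q : ℂ} {f g : ℂ[X]} (h : HasCommonQDivisor q f g) :
    HasCommonQDivisor q g f := by
  obtain ⟨z₀, z₁, z₂, m, n, F, G, hm, hn, hf, hg, hz, hfg⟩ := h
  exact ⟨z₀, z₂, z₁, n, m, G, F, hn, hm, hg, hf, hz.symm,
    by rw [mul_comm, hfg, add_comm, mul_comm F]⟩

lemma hasCommonQDivisor_of_isRoot {q u : ℂ} {f g : ℂ[X]} (hf : f.IsRoot u)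
    (hg : g.IsRoot (q * u)) : HasCommonQDivisor q f g := by
  obtain ⟨F, rfl⟩ := dvd_iff_isRoot.2 hf
  obtain ⟨G, rfl⟩ := dvd_iff_isRoot.2 hg
  refine ⟨u, u, q * u, 1, 1, F, G, le_rfl, le_rfl, by simp [qPow], by simp [qPow],
    Or.inl rfl, ?_⟩
  simp only [qPow, Finset.prod_range_succ, Finset.range_one, Finset.prod_singleton, pow_zero,
    pow_one, one_mul]
  ring

lemma rootMultiplicity_eq_zero_or_of_not_hasCommonQDivisor {q : ℂ} {f g : ℂ[X]}
    (h : ¬ HasCommonQDivisor q f g) (u : ℂ) :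
    f.rootMultiplicity u = 0 ∨ g.rootMultiplicity (q * u) = 0 := by
  by_contra! hfg
  simp only [← Nat.pos_iff_ne_zero, rootMultiplicity_pos'] at hfg
  exact h (hasCommonQDivisor_of_isRoot hfg.1.2 hfg.2.2)

section RelativelyQPrime

variable {q : ℂ} {a b c : ℂ[X]}

lemma min_rootMultiplicity_le_qWronskian (hab : ¬ HasCommonQDivisor q a b)
    (hac : ¬ HasCommonQDivisor q a c) (hbc : ¬ HasCommonQDivisor q b c) (hsum : a + b = c)
    (hP : a * b * c ≠ 0) (hW : qWronskian q a b ≠ 0) (u : ℂ) :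
    min ((a * b * c).rootMultiplicity u) ((a * b * c).rootMultiplicity (q * u)) ≤
      (qWronskian q a b).rootMultiplicity u := by
  obtain ⟨hac', hcb'⟩ := qWronskian_eq_of_add_eq (q := q) hsum
  have h₁ := add_min_rootMultiplicity_le_qWronskian hW u
  have h₂ := add_min_rootMultiplicity_le_qWronskian (hac'.symm ▸ hW) u
  have h₃ := add_min_rootMultiplicity_le_qWronskian (hcb'.symm ▸ hW) u
  rw [hac'] at h₂
  rw [hcb'] at h₃
  rw [rootMultiplicity_mul hP, rootMultiplicity_mul hP,
    rootMultiplicity_mul (left_ne_zero_of_mul hP), rootMultiplicity_mul (left_ne_zero_of_mul hP)]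
  -- By relative q-primality, only one of `a`, `b`, `c` can vanish at both `u` and `q * u`.
  have sep {f g : ℂ[X]} (h : ¬ HasCommonQDivisor q f g) :=
    rootMultiplicity_eq_zero_or_of_not_hasCommonQDivisor h u
  rcases sep hab with _ | _ <;> rcases sep (hab ∘ .symm) with _ | _ <;>
    rcases sep hac with _ | _ <;> rcases sep (hac ∘ .symm) with _ | _ <;>
    rcases sep hbc with _ | _ <;> rcases sep (hbc ∘ .symm) with _ | _ <;>
    omega

namespace QFactorization

lemma max_natDegree_add_one_le_of_qWronskian_ne_zero (F : QFactorization q (a * b * c))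
    (hq : q ≠ 0) (hab : ¬ HasCommonQDivisor q a b) (hac : ¬ HasCommonQDivisor q a c)
    (hbc : ¬ HasCommonQDivisor q b c) (hsum : a + b = c) (hW : qWronskian q a b ≠ 0) :
    max (max a.natDegree b.natDegree) c.natDegree + 1 ≤ F.N := by
  have hP := F.ne_zero
  have hN := F.natDegree_add_one_le_natDegree_add_N hq hW (qWronskian_isRoot_zero q a b)
    (min_rootMultiplicity_le_qWronskian hab hac hbc hsum hP hW)
  obtain ⟨hac', hcb'⟩ := qWronskian_eq_of_add_eq (q := q) hsum
  have hab_deg := natDegree_qWronskian_le q a b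
  have hac_deg := hac' ▸ natDegree_qWronskian_le q a c
  have hcb_deg := hcb' ▸ natDegree_qWronskian_le q c b
  rw [natDegree_mul (left_ne_zero_of_mul hP) (right_ne_zero_of_mul hP),
    natDegree_mul (left_ne_zero_of_mul (left_ne_zero_of_mul hP))
      (right_ne_zero_of_mul (left_ne_zero_of_mul hP))] at hN
  omega

lemma max_natDegree_add_one_le_of_qWronskian_eq_zero (F : QFactorization q (a * b * c))
    (hq : q ≠ 0) (habs : ‖q‖ ≠ 1) (hab : ¬ HasCommonQDivisor q a b) (hsum : a + b = c)
    (hconst : ¬ (a.natDegree = 0 ∧ b.natDegree = 0 ∧ c.natDegree = 0))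
    (hW : qWronskian q a b = 0) :
    max (max a.natDegree b.natDegree) c.natDegree + 1 ≤ F.N := by
  have hP := F.ne_zero
  have hb : b ≠ 0 := right_ne_zero_of_mul (left_ne_zero_of_mul hP)
  obtain ⟨l, rfl⟩ := exists_eq_C_mul_of_qWronskian_eq_zero
    (pow_injective_of_norm_ne_one hq habs) hb hW
  obtain rfl : C (l + 1) * b = c := by rw [← hsum, C_add, C_1]; ring
  have hl : l ≠ 0 := by rintro rfl; simp at hP
  have hl1 : l + 1 ≠ 0 := by intro h; simp [h] at hP
  have hmult (x : ℂ) : (C l * b * b * (C (l + 1) * b)).rootMultiplicity x =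
      3 * b.rootMultiplicity x := by
    rw [rootMultiplicity_mul hP, rootMultiplicity_mul (left_ne_zero_of_mul hP),
      rootMultiplicity_C_mul hl, rootMultiplicity_C_mul hl1]
    ring
  -- `a`, `b`, `c` have the same roots, so roots `u` and `q * u` would give a common q-divisor of
  -- `a` and `b`.
  have hN := F.natDegree_le_N hq fun u => by
    have := rootMultiplicity_eq_zero_or_of_not_hasCommonQDivisor hab u
    rw [rootMultiplicity_C_mul hl] at this
    rw [hmult, hmult]
    omega
  rw [natDegree_mul (left_ne_zero_of_mul hP) (right_ne_zero_of_mul hP),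
    natDegree_mul (left_ne_zero_of_mul (left_ne_zero_of_mul hP)) hb] at hN
  simp only [natDegree_C_mul hl, natDegree_C_mul hl1] at hN hconst ⊢
  omega

end QFactorization

end RelativelyQPrime

/-- q-difference Stothers–Mason theorem. -/
theorem q_stothers_mason (q : ℂ) (hq0 : q ≠ 0) (habs : ‖q‖ ≠ 1)
    (a b c : Polynomial ℂ)
    (hab : ¬ HasCommonQDivisor q a b) (hac : ¬ HasCommonQDivisor q a c)
    (hbc : ¬ HasCommonQDivisor q b c)
    (hsum : a + b = c)
    (hconst : ¬ (a.natDegree = 0 ∧ b.natDegree = 0 ∧ c.natDegree = 0)) :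
    ∀ F : QFactorization q (a * b * c),
      max (max a.natDegree b.natDegree) c.natDegree + 1 ≤ (radQ F).natDegree := by
  intro F
  rw [F.natDegree_radQ]
  by_cases hW : qWronskian q a b = 0
  · exact F.max_natDegree_add_one_le_of_qWronskian_eq_zero hq0 habs hab hsum hconst hW
  · exact F.max_natDegree_add_one_le_of_qWronskian_ne_zero hq0 hab hac hbc hsum hW
end
end

section
/- Let q ∈ ℂ \ {0} with |q| ≠ 1. The polynomials a(z) = [z-1]_q^2 = (z-1)(z-q), b(z) = -[z+1]_q^2 = -(z+1)(z+q), and c(z) = -2(q+1)z satisfy a + b = c, and moreover max{deg a, deg b, deg c} = 2 while rad_q(abc) = z(z-1)(z+1) has degree 3, so the Stothers–Mason bound max{deg a, deg b, deg c} ≤ deg(rad_q(abc)) - 1 is attained with equality. -/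
open Polynomial

noncomputable section

/-! The roots `0, 1, q, -1, -q` of `abc` split into the q-chains `{0}`, `{1, q}`, `{-1, -q}`. Since
`‖q‖ ≠ 1`, the points `±q ^ m` are told apart by their norms `‖q‖ ^ m`; hence `±q ^ 2` and `±q⁻¹`
are roots of no factor, the chains are maximal, and the radical is `z (z - 1) (z + 1)`. -/

section QPow

variable {q w : ℂ} {n : ℕ}

@[simp]
lemma qPow_one : qPow q w 1 = X - C w := by
  simp [qPow]

lemma qPow_two : qPow q w 2 = (X - C w) * (X - C (q * w)) := by
  simp [qPow, Finset.prod_range_succ]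

lemma monic_qPow : (qPow q w n).Monic :=
  monic_prod_of_monic _ _ fun _ _ => monic_X_sub_C _

lemma natDegree_qPow : (qPow q w n).natDegree = n := by
  rw [qPow, natDegree_prod_of_monic _ _ fun _ _ => monic_X_sub_C _]
  simp only [natDegree_X_sub_C, Finset.sum_const, Finset.card_range, smul_eq_mul, mul_one]

lemma eval_qPow_eq_zero_iff {x : ℂ} : (qPow q w n).eval x = 0 ↔ ∃ i < n, x = q ^ i * w := by
  simp [qPow, eval_prod, Finset.prod_eq_zero_iff, sub_eq_zero]

variable {ι : Type*} (z : ι → ℂ) (m : ι → ℕ)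

lemma eval_prod_qPow_eq_zero_iff (s : Finset ι) {x : ℂ} :
    (∏ k ∈ s, qPow q (z k) (m k)).eval x = 0 ↔ ∃ k ∈ s, ∃ i < m k, x = q ^ i * z k := by
  simp [eval_prod, Finset.prod_eq_zero_iff, eval_qPow_eq_zero_iff]

lemma natDegree_C_mul_prod_qPow [Fintype ι] {A : ℂ} (hA : A ≠ 0) :
    (C A * ∏ k, qPow q (z k) (m k)).natDegree = ∑ k, m k := by
  rw [natDegree_C_mul hA, natDegree_prod_of_monic _ _ fun _ _ => monic_qPow]
  simp [natDegree_qPow]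

end QPow

lemma pow_mul_ne_zpow_mul {K : Type*} [NormedDivisionRing K] {q u v : K} (hq0 : q ≠ 0) (habs : ‖q‖ ≠ 1) {i : ℕ} {m : ℤ}
    (him : (i : ℤ) ≠ m) (hu : ‖u‖ = 1) (hv : ‖v‖ = 1) : q ^ i * u ≠ q ^ m * v := by
  intro h
  have hnorm := congrArg norm h
  rw [norm_mul, norm_mul, hu, hv, mul_one, mul_one, norm_pow, norm_zpow, ← zpow_natCast] at hnorm
  exact him ((zpow_right_inj₀ (norm_pos_iff.2 hq0) habs).1 hnorm)

namespace MasonSharp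

/-- The q-chains `{0}`, `{1, q}`, `{-1, -q}` of the roots of `abc`: starting points and lengths. -/
def chainStart : Fin 3 → ℂ := ![0, 1, -1]

def chainLength : Fin 3 → ℕ := ![1, 2, 2]

lemma norm_chainStart {j : Fin 3} (hj : j ≠ 0) : ‖chainStart j‖ = 1 := by
  fin_cases j <;> simp_all [chainStart]

lemma chainStart_ne_zero {j : Fin 3} (hj : j ≠ 0) : chainStart j ≠ 0 :=
  norm_ne_zero_iff.1 (by rw [norm_chainStart hj]; exact one_ne_zero)

lemma chainLength_of_ne_zero {j : Fin 3} (hj : j ≠ 0) : chainLength j = 2 := by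
  fin_cases j <;> simp_all [chainLength]

variable {q : ℂ}

lemma mul_eq_C_mul_prod_qPow :
    (X - 1) * (X - C q) * -((X + 1) * (X + C q)) * -(C (2 * (q + 1)) * X) =
      C (2 * (q + 1)) * ∏ k, qPow q (chainStart k) (chainLength k) := by
  simp only [Fin.prod_univ_three, chainStart, chainLength, Matrix.cons_val, qPow_one, qPow_two,
    map_zero, map_one, map_neg, map_mul, map_add, map_ofNat, sub_zero, mul_one, mul_neg,
    sub_neg_eq_add]
  ring

variable (hq0 : q ≠ 0) (habs : ‖q‖ ≠ 1)
include hq0 habs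

lemma eval_prod_qPow_ne_zero (s : Finset (Fin 3)) {j : Fin 3} (hj : j ≠ 0) {m : ℤ}
    (hm0 : m ≠ 0) (hm1 : m ≠ 1) :
    (∏ k ∈ s, qPow q (chainStart k) (chainLength k)).eval (q ^ m * chainStart j) ≠ 0 := by
  rw [Ne, eval_prod_qPow_eq_zero_iff]
  rintro ⟨k, -, i, hi, h⟩
  by_cases hk : k = 0
  · subst hk
    rw [show chainStart 0 = 0 from rfl, mul_zero] at h
    exact mul_ne_zero (zpow_ne_zero m hq0) (chainStart_ne_zero hj) h
  · rw [chainLength_of_ne_zero hk] at hi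
    exact pow_mul_ne_zpow_mul hq0 habs (by omega) (norm_chainStart hk) (norm_chainStart hj) h.symm

lemma isZeroQWeight_chain (j : Fin 3) :
    IsZeroQWeight q (∏ k ∈ Finset.univ.filter (fun k => j ≤ k), qPow q (chainStart k) (chainLength k))
      (chainStart j) (chainLength j) := by
  by_cases hj : j = 0
  · subst hj
    left
    refine ⟨rfl, (monic_prod_of_monic _ _ fun _ _ => monic_qPow).ne_zero, ?_⟩
    have hR : (∏ k ∈ Finset.univ.erase 0, qPow q (chainStart k) (chainLength k)).eval 0 ≠ 0 := by
      rw [Ne, eval_prod_qPow_eq_zero_iff]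
      rintro ⟨k, hk, i, -, h⟩
      exact mul_ne_zero (pow_ne_zero i hq0) (chainStart_ne_zero (Finset.ne_of_mem_erase hk)) h.symm
    rw [Finset.filter_true_of_mem fun k _ => Fin.zero_le k,
      ← Finset.mul_prod_erase _ _ (Finset.mem_univ 0)]
    have hX : qPow q (chainStart 0) (chainLength 0) = (X - C 0) ^ 1 := by
      simp [chainStart, chainLength]
    rw [hX, mul_comm, rootMultiplicity_mul_X_sub_C_pow fun h => hR (by rw [h, eval_zero]),
      rootMultiplicity_eq_zero hR]
    rfl
  · right
    refine ⟨chainStart_ne_zero hj, fun i hi => ?_, ?_⟩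
    · exact (eval_prod_qPow_eq_zero_iff _ _ _).2 ⟨j, by simp, i, hi, rfl⟩
    · rw [chainLength_of_ne_zero hj, ← zpow_natCast]
      exact eval_prod_qPow_ne_zero hq0 habs _ hj (by norm_num) (by norm_num)

lemma eval_prod_qPow_inv_mul_ne_zero (j : Fin 3) (hj : chainStart j ≠ 0) :
    (∏ k ∈ Finset.univ.filter (fun k => j ≤ k), qPow q (chainStart k) (chainLength k)).eval
      (q⁻¹ * chainStart j) ≠ 0 := by
  have hj0 : j ≠ 0 := by rintro rfl; exact hj rfl
  rw [← zpow_neg_one]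
  exact eval_prod_qPow_ne_zero hq0 habs _ hj0 (by norm_num) (by norm_num)

omit hq0 in
lemma two_mul_add_one_ne_zero : 2 * (q + 1) ≠ 0 :=
  mul_ne_zero two_ne_zero fun h => habs (by simp [eq_neg_of_add_eq_zero_left h])

def factorization :
    QFactorization q ((X - 1) * (X - C q) * -((X + 1) * (X + C q)) * -(C (2 * (q + 1)) * X)) where
  N := 3
  z := chainStart
  n := chainLength
  A := 2 * (q + 1)
  A_ne := two_mul_add_one_ne_zero habs
  n_pos j := by fin_cases j <;> simp [chainLength]
  eq := mul_eq_C_mul_prod_qPow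
  deg_sum := by
    rw [mul_eq_C_mul_prod_qPow, natDegree_C_mul_prod_qPow _ _ (two_mul_add_one_ne_zero habs)]
  chain := isZeroQWeight_chain hq0 habs
  maximal := eval_prod_qPow_inv_mul_ne_zero hq0 habs

lemma radQ_factorization : radQ (factorization hq0 habs) = X * (X - 1) * (X + 1) := by
  change ∏ j : Fin 3, (X - C (chainStart j)) = _
  rw [Fin.prod_univ_three]
  simp [chainStart]

end MasonSharp

/-- Sharpness example for the q-difference Stothers–Mason theorem. -/
theorem q_mason_sharp (q : ℂ) (hq0 : q ≠ 0) (habs : ‖q‖ ≠ 1) :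
    let a : Polynomial ℂ := (X - 1) * (X - C q)
    let b : Polynomial ℂ := -((X + 1) * (X + C q))
    let c : Polynomial ℂ := -(C (2 * (q + 1)) * X)
    a + b = c ∧ max (max a.natDegree b.natDegree) c.natDegree = 2 ∧
      ∃ F : QFactorization q (a * b * c),
        radQ F = X * (X - 1) * (X + 1) ∧ (radQ F).natDegree = 3 := by
  intro a b c
  refine ⟨?_, ?_, MasonSharp.factorization hq0 habs, MasonSharp.radQ_factorization hq0 habs, ?_⟩
  · simp only [a, b, c, map_mul, map_add, map_ofNat, map_one]
    ring
  · have ha : a.natDegree = 2 := by simp only [a]; compute_degree!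
    have hb : b.natDegree = 2 := by simp only [b, natDegree_neg]; compute_degree!
    have hc : c.natDegree = 1 := by
      rw [natDegree_neg, natDegree_C_mul_X _ (MasonSharp.two_mul_add_one_ne_zero habs)]
    rw [ha, hb, hc]
    rfl
  · rw [MasonSharp.radQ_factorization hq0 habs]
    compute_degree!
end
end
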